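/- Let G be a graph with at least one edge such that for every maximal clique C of G, every vertex of C is an endpoint of some edge occupied by C. Then G has an effective competition cover, and in fact the set of all maximal cliques of G is a minimum edge clique cover. -/

import Mathlib

/-- A digraph (given by its arc relation) is acyclic if it has no directed cycle. -/
def Digraph.Acyclic {W : Type*} (A : W → W → Prop) : Prop :=
  ∀ v, ¬ Relation.TransGen A v v

/-- The competition graph of a digraph: distinct `x`, `y` are adjacent iff
they have a common out-neighbor. -/
def competitionGraph {W : Type*} (A : W → W → Prop) : SimpleGraph W where
  Adj x y := x ≠ y ∧ ∃ z, A x z ∧ A y z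
  symm := by
    constructor
    rintro x y ⟨h, z, hx, hy⟩
    exact ⟨h.symm, z, hy, hx⟩
  loopless := by
    constructor
    rintro x ⟨h, -⟩
    exact h rfl

/-- `G` together with `k` additional isolated vertices. -/
def addIsolated {V : Type*} (G : SimpleGraph V) (k : ℕ) : SimpleGraph (V ⊕ Fin k) where
  Adj x y := ∃ u v, G.Adj u v ∧ x = Sum.inl u ∧ y = Sum.inl v
  symm := by
    constructor
    rintro x y ⟨u, v, h, rfl, rfl⟩
    exact ⟨v, u, h.symm, rfl, rfl⟩
  loopless := by
    constructor
    rintro x ⟨u, v, h, rfl, hy⟩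
    exact G.loopless.irrefl u (Sum.inl.inj hy ▸ h)

/-- `F` is an edge clique cover of `G`. -/
def IsEdgeCliqueCover {V : Type*} (G : SimpleGraph V) (F : Finset (Set V)) : Prop :=
  (∀ C ∈ F, G.IsClique C) ∧ ∀ u v, G.Adj u v → ∃ C ∈ F, u ∈ C ∧ v ∈ C

/-- The edge clique cover number `θ_e(G)`. -/
noncomputable def eccNumber {V : Type*} (G : SimpleGraph V) : ℕ :=
  sInf {n | ∃ F : Finset (Set V), IsEdgeCliqueCover G F ∧ F.card = n}

/-- An acyclic digraph `A` on `V ⊕ Fin k` realizes `G` with `k` added isolated vertices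
if its competition graph is `G` together with `k` isolated vertices. -/
def Realizes {V : Type*} (G : SimpleGraph V) (k : ℕ)
    (A : (V ⊕ Fin k) → (V ⊕ Fin k) → Prop) : Prop :=
  Digraph.Acyclic A ∧ competitionGraph A = addIsolated G k

/-- The competition number `k(G)`. -/
noncomputable def compNumber {V : Type*} (G : SimpleGraph V) : ℕ :=
  sInf {k | ∃ A : (V ⊕ Fin k) → (V ⊕ Fin k) → Prop, Realizes G k A}

/-- The primary predator index `p(G)`: the maximum number of in-degree-0 vertices over
all acyclic digraphs whose competition graph is `G` plus `k(G)` isolated vertices. -/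
noncomputable def predatorIndex {V : Type*} (G : SimpleGraph V) : ℕ :=
  sSup {n | ∃ A : (V ⊕ Fin (compNumber G)) → (V ⊕ Fin (compNumber G)) → Prop,
    Realizes G (compNumber G) A ∧ {v | ∀ u, ¬ A u v}.ncard = n}

/-- `C` is a maximal clique of `G`. -/
def IsMaximalClique {V : Type*} (G : SimpleGraph V) (C : Set V) : Prop :=
  G.IsClique C ∧ ∀ D : Set V, G.IsClique D → C ⊆ D → C = D

/-- The acyclic digraph `A` accompanies the minimum edge clique cover `𝒞`. -/
def Accompanies {V : Type*} (G : SimpleGraph V) (𝒞 : Finset (Set V))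
    (A : (V ⊕ Fin (compNumber G)) → (V ⊕ Fin (compNumber G)) → Prop) : Prop :=
  Realizes G (compNumber G) A ∧
  ∃ w : 𝒞 → (V ⊕ Fin (compNumber G)), Function.Injective w ∧
    (∀ C : 𝒞, ∀ v ∈ (C : Set V), A (Sum.inl v) (w C)) ∧
    {x | ∃ u, A u x} = Set.range w

/-- `𝒞` is an effective competition cover of `G`. -/
def IsEffectiveCompetitionCover {V : Type*} (G : SimpleGraph V) (𝒞 : Finset (Set V)) : Prop :=
  IsEdgeCliqueCover G 𝒞 ∧ 𝒞.card = eccNumber G ∧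
  (∀ C ∈ 𝒞, IsMaximalClique G C) ∧
  ∃ A : (V ⊕ Fin (compNumber G)) → (V ⊕ Fin (compNumber G)) → Prop, Accompanies G 𝒞 A

/-- The diamond graph: `K₄` minus the edge between vertices `2` and `3`. -/
def diamondGraph : SimpleGraph (Fin 4) where
  Adj i j := i ≠ j ∧ ¬(i = 2 ∧ j = 3) ∧ ¬(i = 3 ∧ j = 2)
  symm := by
    constructor
    rintro i j ⟨h, h1, h2⟩
    exact ⟨h.symm, fun ⟨a, b⟩ => h2 ⟨b, a⟩, fun ⟨a, b⟩ => h1 ⟨b, a⟩⟩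
  loopless := by
    constructor
    rintro i ⟨h, -⟩
    exact h rfl

/-- `G` contains `H` as an induced subgraph. -/
def ContainsInduced {V W : Type*} (G : SimpleGraph V) (H : SimpleGraph W) : Prop :=
  ∃ f : W ↪ V, ∀ a b, G.Adj (f a) (f b) ↔ H.Adj a b

/-- `G` is diamond-free: it has no induced diamond. -/
def DiamondFree {V : Type*} (G : SimpleGraph V) : Prop :=
  ¬ ContainsInduced G diamondGraph

/-- `G` is chordal: it has no induced cycle of length at least `4`. -/
def Chordal {V : Type*} (G : SimpleGraph V) : Prop :=
  ∀ n, 4 ≤ n → ¬ ContainsInduced G (SimpleGraph.cycleGraph n)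

/-- The edge `uv` is occupied by `C`: `C` is the unique maximal clique covering `uv`. -/
def Occupies {V : Type*} (G : SimpleGraph V) (C : Set V) (u v : V) : Prop :=
  G.Adj u v ∧ IsMaximalClique G C ∧ u ∈ C ∧ v ∈ C ∧
    ∀ C' : Set V, IsMaximalClique G C' → u ∈ C' → v ∈ C' → C' = C

/-! Every maximal clique `C` has an occupied edge, and a clique of an edge clique cover can
contain occupied edges of only one maximal clique; so the maximal cliques form a minimum
edge clique cover.

For the digraph, start from any acyclic digraph `D` realizing `G` with `k(G)` isolated
vertices and rank its vertices along `D`. For each maximal clique `C`, choose among the common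
out-neighbours of the occupied edges of `C` one, `w_C`, of largest rank. The `w_C` are distinct:
the in-neighbours of a vertex of `D` form a clique of `G`, and a clique containing occupied
edges of `C` and `C'` forces `C = C'`. Replace `D` by the arcs `v → w_C` for `v ∈ C`. A vertex
`v ∈ C` lies on an occupied edge of `C`, whose common out-neighbour in `D` ranks above `v` and
at most as high as `w_C`, so the new digraph is still acyclic. -/

section Digraph

variable {W : Type*} {A : W → W → Prop}

lemma Digraph.acyclic_of_lt {α : Type*} [Preorder α] (r : W → α)
    (hr : ∀ x y, A x y → r x < r y) : Digraph.Acyclic A := by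
  have hlt : ∀ x y, Relation.TransGen A x y → r x < r y := by
    intro x y h
    induction h with
    | single h => exact hr _ _ h
    | tail _ h ih => exact ih.trans (hr _ _ h)
  exact fun v hv => lt_irrefl _ (hlt v v hv)

/-- The rank of `x` is the number of vertices from which `x` can be reached. -/
lemma Digraph.Acyclic.exists_rank [Finite W] (hA : Digraph.Acyclic A) :
    ∃ r : W → ℕ, ∀ x y, A x y → r x < r y := by
  refine ⟨fun x => {y | Relation.TransGen A y x}.ncard, fun x y hxy => Set.ncard_lt_ncard ?_⟩
  refine Set.ssubset_iff_of_subset (fun v hv => hv.tail hxy) |>.2 ⟨x, ?_, hA x⟩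
  exact Relation.TransGen.single hxy

end Digraph

section Cliques

variable {V : Type*} {G : SimpleGraph V}

lemma exists_isMaximalClique_superset [Finite V] {D : Set V} (hD : G.IsClique D) :
    ∃ C, D ⊆ C ∧ IsMaximalClique G C := by
  obtain ⟨C, ⟨hC, hDC⟩, hmax⟩ := Set.Finite.exists_maximalFor id
    {C | G.IsClique C ∧ D ⊆ C} (Set.toFinite _) ⟨D, hD, subset_rfl⟩
  exact ⟨C, hDC, hC, fun E hE hCE => hCE.antisymm (hmax ⟨hE, hDC.trans hCE⟩ hCE)⟩

lemma IsMaximalClique.nonempty [Nonempty V] {C : Set V} (hC : IsMaximalClique G C) :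
    C.Nonempty := by
  obtain ⟨u⟩ := ‹Nonempty V›
  rw [Set.nonempty_iff_ne_empty]
  rintro rfl
  exact Set.singleton_ne_empty u (hC.2 {u} (SimpleGraph.isClique_singleton u) (by simp)).symm

lemma Occupies.eq_of_isClique [Finite V] {C C' D : Set V} {a b a' b' : V}
    (h : Occupies G C a b) (h' : Occupies G C' a' b') (hD : G.IsClique D)
    (ha : a ∈ D) (hb : b ∈ D) (ha' : a' ∈ D) (hb' : b' ∈ D) : C = C' := by
  obtain ⟨M, hDM, hM⟩ := exists_isMaximalClique_superset hD
  exact (h.2.2.2.2 M hM (hDM ha) (hDM hb)).symm.trans (h'.2.2.2.2 M hM (hDM ha') (hDM hb'))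

variable (G) in
noncomputable def maximalCliques [Finite V] : Finset (Set V) :=
  (Set.toFinite {C | IsMaximalClique G C}).toFinset

variable [Finite V]

@[simp]
lemma mem_maximalCliques {C : Set V} : C ∈ maximalCliques G ↔ IsMaximalClique G C :=
  Set.Finite.mem_toFinset _

lemma coe_maximalCliques : (maximalCliques G : Set (Set V)) = {C | IsMaximalClique G C} :=
  Set.Finite.coe_toFinset _

lemma isEdgeCliqueCover_maximalCliques : IsEdgeCliqueCover G (maximalCliques G) := by
  refine ⟨fun C hC => (mem_maximalCliques.1 hC).1, fun u v huv => ?_⟩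
  obtain ⟨C, huvC, hC⟩ :=
    exists_isMaximalClique_superset (SimpleGraph.isClique_pair.2 fun _ => huv)
  exact ⟨C, mem_maximalCliques.2 hC, huvC (by simp), huvC (by simp)⟩

/-- Sending a maximal clique to a clique of `F` covering one of its occupied edges is
injective. -/
lemma card_maximalCliques_le (hocc : ∀ C, IsMaximalClique G C → ∃ a b, Occupies G C a b)
    {F : Finset (Set V)} (hF : IsEdgeCliqueCover G F) : (maximalCliques G).card ≤ F.card := by
  have hcover : ∀ C ∈ maximalCliques G, ∃ D ∈ F, ∃ a b, Occupies G C a b ∧ a ∈ D ∧ b ∈ D := by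
    intro C hC
    obtain ⟨a, b, hab⟩ := hocc C (mem_maximalCliques.1 hC)
    obtain ⟨D, hD, haD, hbD⟩ := hF.2 a b hab.1
    exact ⟨D, hD, a, b, hab, haD, hbD⟩
  choose! f hfF a b hab haf hbf using hcover
  refine Finset.card_le_card_of_injOn f hfF fun C hC C' hC' hff => ?_
  exact (hab C hC).eq_of_isClique (hab C' hC') (hF.1 _ (hfF C hC)) (haf C hC) (hbf C hC)
    (hff ▸ haf C' hC') (hff ▸ hbf C' hC')

end Cliques

lemma eccNumber_eq_card {V : Type*} {G : SimpleGraph V} {F : Finset (Set V)}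
    (hF : IsEdgeCliqueCover G F) (hmin : ∀ F', IsEdgeCliqueCover G F' → F.card ≤ F'.card) :
    eccNumber G = F.card :=
  le_antisymm (Nat.sInf_le ⟨F, hF, rfl⟩) (le_csInf ⟨F.card, F, hF, rfl⟩ fun _ ⟨F', hF', h⟩ =>
    h ▸ hmin F' hF')

section Competition

variable {V : Type*} {G : SimpleGraph V} {k : ℕ}

lemma addIsolated_adj_inl {u v : V} : (addIsolated G k).Adj (.inl u) (.inl v) ↔ G.Adj u v := by
  refine ⟨fun ⟨a, b, hab, ha, hb⟩ => ?_, fun h => ⟨u, v, h, rfl, rfl⟩⟩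
  rwa [Sum.inl.inj ha, Sum.inl.inj hb]

lemma Realizes.adj_iff {A : V ⊕ Fin k → V ⊕ Fin k → Prop} (hA : Realizes G k A) {u v : V} :
    G.Adj u v ↔ u ≠ v ∧ ∃ z, A (.inl u) z ∧ A (.inl v) z := by
  rw [← addIsolated_adj_inl (k := k), ← hA.2]
  simp [competitionGraph]

lemma Realizes.isClique_setOf_rel {A : V ⊕ Fin k → V ⊕ Fin k → Prop} (hA : Realizes G k A)
    (z : V ⊕ Fin k) : G.IsClique {v | A (.inl v) z} :=
  fun _ hu _ hv huv => hA.adj_iff.2 ⟨huv, z, hu, hv⟩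

variable (G) in
def cliqueDigraph (z : Set V → V ⊕ Fin k) (x y : V ⊕ Fin k) : Prop :=
  ∃ C, IsMaximalClique G C ∧ y = z C ∧ ∃ v ∈ C, x = .inl v

lemma competitionGraph_cliqueDigraph [Finite V] {z : Set V → V ⊕ Fin k}
    (hz : Set.InjOn z {C | IsMaximalClique G C}) :
    competitionGraph (cliqueDigraph G z) = addIsolated G k := by
  ext x y
  constructor
  · rintro ⟨hxy, _, ⟨C, hC, rfl, u, hu, rfl⟩, ⟨C', hC', hCC', v, hv, rfl⟩⟩
    obtain rfl : C = C' := hz hC hC' hCC'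
    exact ⟨u, v, hC.1 hu hv (by rintro rfl; exact hxy rfl), rfl, rfl⟩
  · rintro ⟨u, v, huv, rfl, rfl⟩
    obtain ⟨C, huvC, hC⟩ :=
      exists_isMaximalClique_superset (SimpleGraph.isClique_pair.2 fun _ => huv)
    exact ⟨by simpa using huv.ne, z C, ⟨C, hC, rfl, u, huvC (by simp), rfl⟩,
      ⟨C, hC, rfl, v, huvC (by simp), rfl⟩⟩

lemma acyclic_cliqueDigraph {α : Type*} [Preorder α] {z : Set V → V ⊕ Fin k}
    (r : V ⊕ Fin k → α) (hr : ∀ C, IsMaximalClique G C → ∀ v ∈ C, r (.inl v) < r (z C)) :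
    Digraph.Acyclic (cliqueDigraph G z) :=
  Digraph.acyclic_of_lt r fun _ _ ⟨C, hC, hy, v, hv, hx⟩ => hx ▸ hy ▸ hr C hC v hv

lemma setOf_cliqueDigraph_eq_image [Nonempty V] (z : Set V → V ⊕ Fin k) :
    {y | ∃ x, cliqueDigraph G z x y} = z '' {C | IsMaximalClique G C} := by
  ext y
  constructor
  · rintro ⟨_, C, hC, rfl, -⟩
    exact ⟨C, hC, rfl⟩
  · rintro ⟨C, hC, rfl⟩
    obtain ⟨v, hv⟩ := hC.nonempty
    exact ⟨.inl v, C, hC, rfl, v, hv, rfl⟩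

/-- Give every maximal clique its own new isolated prey. -/
lemma exists_realizes [Finite V] : ∃ k A, Realizes G k A := by
  let e := Finite.equivFin (Set V)
  refine ⟨_, cliqueDigraph G (.inr ∘ e), ?_, competitionGraph_cliqueDigraph ?_⟩
  · exact acyclic_cliqueDigraph (Sum.elim (fun _ => 0) fun _ => 1) fun _ _ _ _ => zero_lt_one
  · exact fun C _ C' _ h => e.injective (Sum.inr_injective h)

lemma exists_realizes_compNumber [Finite V] : ∃ A, Realizes G (compNumber G) A :=
  Nat.sInf_mem exists_realizes

lemma Realizes.exists_realizes_cliqueDigraph [Finite V] [Nonempty V]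
    {A : V ⊕ Fin k → V ⊕ Fin k → Prop} (hA : Realizes G k A)
    (hocc : ∀ C : Set V, IsMaximalClique G C → ∀ v ∈ C, ∃ u : V, Occupies G C v u) :
    ∃ z : Set V → V ⊕ Fin k, Set.InjOn z {C | IsMaximalClique G C} ∧
      Realizes G k (cliqueDigraph G z) := by
  obtain ⟨r, hr⟩ := hA.1.exists_rank
  let prey (C : Set V) : Set (V ⊕ Fin k) :=
    {z | ∃ a b, Occupies G C a b ∧ A (.inl a) z ∧ A (.inl b) z}
  have hprey : ∀ C, IsMaximalClique G C → ∀ v ∈ C, ∃ y ∈ prey C, A (.inl v) y := by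
    intro C hC v hv
    obtain ⟨u, hvu⟩ := hocc C hC v hv
    obtain ⟨-, y, hvy, huy⟩ := hA.adj_iff.1 hvu.1
    exact ⟨y, ⟨v, u, hvu, hvy, huy⟩, hvy⟩
  have hmax : ∀ C, IsMaximalClique G C → ∃ z ∈ prey C, ∀ y ∈ prey C, r y ≤ r z := by
    intro C hC
    obtain ⟨v, hv⟩ := hC.nonempty
    obtain ⟨y, hy, -⟩ := hprey C hC v hv
    exact Set.exists_max_image _ r (Set.toFinite _) ⟨y, hy⟩
  choose! z hzprey hzmax using hmax
  have hinj : Set.InjOn z {C | IsMaximalClique G C} := by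
    intro C hC C' hC' hCC'
    obtain ⟨a, b, hab, ha, hb⟩ := hzprey C hC
    obtain ⟨a', b', hab', ha', hb'⟩ := hzprey C' hC'
    rw [← hCC'] at ha' hb'
    exact hab.eq_of_isClique hab' (hA.isClique_setOf_rel (z C)) ha hb ha' hb'
  refine ⟨z, hinj, acyclic_cliqueDigraph r fun C hC v hv => ?_, competitionGraph_cliqueDigraph hinj⟩
  obtain ⟨y, hy, hvy⟩ := hprey C hC v hv
  exact (hr _ _ hvy).trans_le (hzmax C hC y hy)

lemma exists_accompanies_maximalCliques [Finite V] [Nonempty V]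
    (hocc : ∀ C : Set V, IsMaximalClique G C → ∀ v ∈ C, ∃ u : V, Occupies G C v u) :
    ∃ A, Accompanies G (maximalCliques G) A := by
  obtain ⟨A, hA⟩ := exists_realizes_compNumber (G := G)
  obtain ⟨z, hinj, hz⟩ := hA.exists_realizes_cliqueDigraph hocc
  refine ⟨cliqueDigraph G z, hz, fun C => z C, fun C C' h => ?_, ?_, ?_⟩
  · exact Subtype.ext (hinj (mem_maximalCliques.1 C.2) (mem_maximalCliques.1 C'.2) h)
  · exact fun C v hv => ⟨C, mem_maximalCliques.1 C.2, rfl, v, hv, rfl⟩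
  · rw [setOf_cliqueDigraph_eq_image, ← coe_maximalCliques, Set.image_eq_range]
    rfl

end Competition

/-- if every vertex of every maximal clique `C` is an endpoint of an edge
occupied by `C`, then the set of all maximal cliques of `G` is a minimum edge clique
cover, and it is an effective competition cover. -/
theorem stmt10 {V : Type*} [Fintype V] (G : SimpleGraph V)
    (hedge : ∃ u v : V, G.Adj u v)
    (hocc : ∀ C : Set V, IsMaximalClique G C → ∀ v ∈ C, ∃ u : V, Occupies G C v u) :
    ∃ 𝒞 : Finset (Set V), (↑𝒞 : Set (Set V)) = {C | IsMaximalClique G C} ∧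
      IsEffectiveCompetitionCover G 𝒞 := by
  obtain ⟨u, -, -⟩ := hedge
  have : Nonempty V := ⟨u⟩
  have hmin : ∀ F, IsEdgeCliqueCover G F → (maximalCliques G).card ≤ F.card := by
    refine fun F => card_maximalCliques_le fun C (hC : IsMaximalClique G C) => ?_
    obtain ⟨v, hv⟩ := hC.nonempty
    obtain ⟨w, hvw⟩ := hocc C hC v hv
    exact ⟨v, w, hvw⟩
  exact ⟨maximalCliques G, coe_maximalCliques, isEdgeCliqueCover_maximalCliques,
    (eccNumber_eq_card isEdgeCliqueCover_maximalCliques hmin).symm,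
    fun _ hC => mem_maximalCliques.1 hC, exists_accompanies_maximalCliques hocc⟩
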